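/- For every x ∈ X the function t ↦ p(t,x,x) is monotone non-increasing on (0,∞), and p(t,x,x) < ∞ for every t > T(x), where T(x) = limsup_{τ→∞} (log N(x,τ))/τ. -/

import Mathlib

open MeasureTheory Metric Filter
open scoped ENNReal Classical

/-- The averaging operator `Q_r f(x) = μ(B_r(x))⁻¹ ∫_{B_r(x)} f dμ`. -/
noncomputable def avgOp {X : Type*} [MetricSpace X] [MeasurableSpace X]
    (μ : Measure X) (r : ℝ) (f : X → ℝ) (x : X) : ℝ :=
  (μ (closedBall x r)).toReal⁻¹ * ∫ y in closedBall x r, f y ∂μ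

/-- The isotropic Markov operator `P^t f(x) = ∫_[0,∞) Q_r f(x) dσ^t(r)`,
where `νt` is the Lebesgue–Stieltjes measure of `σ^t`. -/
noncomputable def isoOp {X : Type*} [MetricSpace X] [MeasurableSpace X]
    (μ : Measure X) (νt : Measure ℝ) (f : X → ℝ) (x : X) : ℝ :=
  ∫ r in Set.Ici (0:ℝ), avgOp μ r f x ∂νt

/-- The heat kernel `p(t,x,y) = ∫_[d(x,y),∞) μ(B_r(x))⁻¹ dσ^t(r)`. -/
noncomputable def heatK {X : Type*} [MetricSpace X] [MeasurableSpace X]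
    (μ : Measure X) (ν : ℝ → Measure ℝ) (t : ℝ) (x y : X) : ℝ≥0∞ :=
  ∫⁻ r in Set.Ici (dist x y), (μ (closedBall x r))⁻¹ ∂(ν t)

/-- The intrinsic ultra-metric `d_*(x,y) = 1/log(1/σ(d(x,y)))` for `x ≠ y`. -/
noncomputable def dstar {X : Type*} [MetricSpace X] (σ : ℝ → ℝ) (x y : X) : ℝ :=
  if x = y then 0 else 1 / Real.log (1 / σ (dist x y))

/-- The closed ball `B*_s(x)` of the intrinsic ultra-metric. -/
def starBall {X : Type*} [MetricSpace X] (σ : ℝ → ℝ) (x : X) (s : ℝ) : Set X :=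
  {y | dstar σ x y ≤ s}

/-- The spectral distribution function `N(x,τ) = 1/μ(B*_{1/τ}(x))`. -/
noncomputable def specN {X : Type*} [MetricSpace X] [MeasurableSpace X]
    (μ : Measure X) (σ : ℝ → ℝ) (x : X) (τ : ℝ) : ℝ≥0∞ :=
  (μ (starBall σ x (1 / τ)))⁻¹

/-- The Green function `g(x,y) = ∫_0^∞ p(t,x,y) dt`. -/
noncomputable def greenF {X : Type*} [MetricSpace X] [MeasurableSpace X]
    (μ : Measure X) (ν : ℝ → Measure ℝ) (x y : X) : ℝ≥0∞ :=
  ∫⁻ t in Set.Ioi (0:ℝ), heatK μ ν t x y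

/-!
Write `g r = μ(B_r(x))⁻¹`, an antitone function, so that `p(t,x,x) = ∫ g dσ^t`.
Since `0 ≤ σ ≤ 1`, the mass `σ(b)^t` that `dσ^t` gives to `[0, b)` decreases in `t`; hence so
does the mass of every initial segment of `ℝ`, and the layer-cake formula turns this into
monotonicity of `∫ g dσ^t`.

For finiteness, the intrinsic ball `B*_{1/τ}(x)` is the closed ball of radius
`R τ = sup {r ≥ 0 | σ r ≤ exp (-τ)}`, so `g (R τ) = N(x,τ) ≤ exp (s τ)` for large `τ` once
`T(x) < s < t`, while `dσ^t` gives mass `σ(R τ)^t ≤ exp (-t τ)` to `[0, R τ)`. Cutting `(0, ∞)`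
into the shells `[R (k + 1), R k)` bounds `∫ g dσ^t` by a convergent geometric series.
-/

open Set Topology

section IioDomination

variable {ν₁ ν₂ : Measure ℝ}

lemma measure_le_of_isLowerSet [IsFiniteMeasure ν₁] (h : ∀ b, ν₂ (Iio b) ≤ ν₁ (Iio b))
    {L : Set ℝ} (hL : IsLowerSet L) : ν₂ L ≤ ν₁ L := by
  rcases L.eq_empty_or_nonempty with rfl | hne
  · simp
  by_cases hbdd : BddAbove L
  swap
  · obtain rfl : L = univ := eq_univ_of_forall fun r =>
      let ⟨a, ha, hra⟩ := not_bddAbove_iff.1 hbdd r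
      hL hra.le ha
    refine le_of_tendsto' (tendsto_measure_Iic_atTop ν₂) fun r => ?_
    calc ν₂ (Iic r) ≤ ν₂ (Iio (r + 1)) := measure_mono (Iic_subset_Iio.2 (lt_add_one r))
      _ ≤ ν₁ (Iio (r + 1)) := h _
      _ ≤ ν₁ univ := measure_mono (subset_univ _)
  set c := sSup L
  have hIio : Iio c ⊆ L := fun r hr =>
    let ⟨a, ha, hra⟩ := exists_lt_of_lt_csSup hne hr
    hL hra.le ha
  by_cases hc : c ∈ L
  · have hLc : L = Iic c := Subset.antisymm (fun r hr => le_csSup hbdd hr)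
      fun r hr => (mem_Iic.1 hr).eq_or_lt.elim (fun h => h ▸ hc) fun h => hIio h
    rw [hLc]
    have hlim : Tendsto (fun r => ν₁ (Iio r)) (𝓝[>] c) (𝓝 (ν₁ (⋂ r > c, Iio r))) :=
      tendsto_measure_biInter_gt (fun _ _ => measurableSet_Iio.nullMeasurableSet)
        (fun _ _ _ hij => Iio_subset_Iio hij) ⟨c + 1, lt_add_one c, measure_ne_top _ _⟩
    have hIic : ⋂ r > c, Iio r = Iic c := by
      ext r
      simp only [mem_iInter, mem_Iio, mem_Iic]
      exact ⟨fun h => le_of_forall_gt h, fun h b hb => h.trans_lt hb⟩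
    rw [hIic] at hlim
    refine ge_of_tendsto hlim (eventually_nhdsWithin_of_forall fun r hr => ?_)
    exact (measure_mono (Iic_subset_Iio.2 hr)).trans (h r)
  · have hLc : L = Iio c := Subset.antisymm
      (fun r hr => (le_csSup hbdd hr).lt_of_ne (by rintro rfl; exact hc hr)) hIio
    rw [hLc]
    exact h c

lemma lintegral_le_of_antitone_of_measure_Iio_le [IsFiniteMeasure ν₁]
    (h : ∀ b, ν₂ (Iio b) ≤ ν₁ (Iio b)) {g : ℝ → ℝ≥0∞} (hg : Antitone g) :
    ∫⁻ r, g r ∂ν₂ ≤ ∫⁻ r, g r ∂ν₁ := by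
  -- the layer-cake formula needs real values, so compare the truncations `min g n` first
  have hbounded : ∀ n : ℕ, ∫⁻ r, min (g r) n ∂ν₂ ≤ ∫⁻ r, min (g r) n ∂ν₁ := by
    intro n
    set f : ℝ → ℝ := fun r => (min (g r) n).toReal
    have hfin : ∀ r, min (g r) n ≠ ⊤ := fun r => (min_le_right _ _).trans_lt (by simp) |>.ne
    have hf : Antitone f := fun a b hab =>
      ENNReal.toReal_mono (hfin a) (min_le_min_right _ (hg hab))
    have hlayer : ∀ ν : Measure ℝ, ∫⁻ r, min (g r) n ∂ν = ∫⁻ s in Ioi 0, ν {r | s < f r} := by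
      intro ν
      rw [← lintegral_eq_lintegral_meas_lt ν (ae_of_all _ fun r => ENNReal.toReal_nonneg)
        hf.measurable.aemeasurable]
      simp only [ENNReal.ofReal_toReal (hfin _)]
    rw [hlayer, hlayer]
    exact lintegral_mono fun s =>
      measure_le_of_isLowerSet h fun a b hab ha => lt_of_lt_of_le ha (hf hab)
  have hsup : ∀ ν : Measure ℝ, ∫⁻ r, g r ∂ν = ⨆ n : ℕ, ∫⁻ r, min (g r) n ∂ν := by
    intro ν
    rw [← lintegral_iSup (fun n => hg.measurable.min measurable_const)
      fun m n hmn r => min_le_min_left _ (by exact_mod_cast hmn)]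
    congr with r
    rw [← inf_iSup_eq, ENNReal.iSup_natCast, inf_top_eq]
  rw [hsup, hsup]
  exact iSup_mono hbounded

end IioDomination

lemma lintegral_le_add_tsum_of_antitone {ν : Measure ℝ} {g : ℝ → ℝ≥0∞} (hg : Antitone g)
    {c : ℕ → ℝ} (hν : ∀ᵐ r ∂ν, 0 < r) (hc : ∀ r, 0 < r → ∃ k, c k ≤ r) :
    ∫⁻ r, g r ∂ν ≤ g (c 0) * ν univ + ∑' k, g (c (k + 1)) * ν (Iio (c k)) := by
  have hpt : ∀ r, 0 < r →
      g r ≤ g (c 0) + ∑' k, (Iio (c k)).indicator (fun _ => g (c (k + 1))) r := by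
    intro r hr
    by_cases h0 : c 0 ≤ r
    · exact (hg h0).trans le_self_add
    -- the first `k` with `c k ≤ r` is some `j + 1`, and then `r ∈ [c (j + 1), c j)`
    obtain ⟨j, hj⟩ := Nat.exists_eq_succ_of_ne_zero fun h => h0 (h ▸ Nat.find_spec (hc r hr))
    have hle : c (j + 1) ≤ r := by simpa [hj] using Nat.find_spec (hc r hr)
    have hlt : r < c j := not_le.1 (Nat.find_min (hc r hr) (by omega))
    calc g r ≤ g (c (j + 1)) := hg hle
      _ = (Iio (c j)).indicator (fun _ => g (c (j + 1))) r :=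
          (indicator_of_mem (mem_Iio.2 hlt) fun _ => g (c (j + 1))).symm
      _ ≤ ∑' k, (Iio (c k)).indicator (fun _ => g (c (k + 1))) r := ENNReal.le_tsum j
      _ ≤ _ := le_add_self
  calc ∫⁻ r, g r ∂ν
      ≤ ∫⁻ r, g (c 0) + ∑' k, (Iio (c k)).indicator (fun _ => g (c (k + 1))) r ∂ν :=
        lintegral_mono_ae (hν.mono hpt)
    _ = g (c 0) * ν univ + ∑' k, g (c (k + 1)) * ν (Iio (c k)) := by
        rw [lintegral_add_left measurable_const, lintegral_tsum fun k =>
          (measurable_const.indicator measurableSet_Iio).aemeasurable, lintegral_const]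
        simp only [lintegral_indicator_const measurableSet_Iio]

lemma tsum_ofReal_exp_lt_top {a : ℝ} (b : ℝ) (ha : a < 0) :
    ∑' k : ℕ, ENNReal.ofReal (Real.exp (b + k * a)) < ⊤ := by
  have hsum : Summable fun k : ℕ => Real.exp (b + k * a) := by
    simp_rw [Real.exp_add]
    exact (Real.summable_exp_nat_mul_iff.2 ha).mul_left _
  rw [← ENNReal.ofReal_tsum_of_nonneg (fun _ => (Real.exp_pos _).le) hsum]
  exact ENNReal.ofReal_lt_top

lemma eventually_le_ofReal_exp_of_limsup_lt {f : ℝ → ℝ≥0∞} {s : ℝ}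
    (hf : ∀ᶠ τ in atTop, f τ ≠ ⊤)
    (h : limsup (fun τ : ℝ => ((Real.log (f τ).toReal / τ : ℝ) : EReal)) atTop < s) :
    ∀ᶠ τ in atTop, f τ ≤ ENNReal.ofReal (Real.exp (s * τ)) := by
  filter_upwards [eventually_lt_of_limsup_lt h, hf, eventually_gt_atTop 0] with τ hlt hfτ hτ
  rw [ENNReal.le_ofReal_iff_toReal_le hfτ (Real.exp_pos _).le]
  rcases ENNReal.toReal_nonneg.eq_or_lt with h0 | hpos
  · exact h0 ▸ (Real.exp_pos _).le
  rw [EReal.coe_lt_coe_iff, div_lt_iff₀ hτ] at hlt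
  exact ((Real.log_lt_iff_lt_exp hpos).1 hlt).le

lemma antitone_inv_measure_closedBall {X : Type*} [MetricSpace X] [MeasurableSpace X]
    (μ : Measure X) (x : X) : Antitone fun r => (μ (closedBall x r))⁻¹ := fun _ _ hab =>
  ENNReal.inv_le_inv.2 (measure_mono (closedBall_subset_closedBall hab))

structure IsDistanceDistribution (σ : ℝ → ℝ) : Prop where
  strictMonoOn : StrictMonoOn σ (Ici 0)
  mem_Icc : ∀ r, 0 ≤ r → σ r ∈ Icc (0 : ℝ) 1
  continuousWithinAt_Iic : ∀ r, 0 < r → ContinuousWithinAt σ (Iic r) r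
  tendsto_nhdsGT_zero : Tendsto σ (𝓝[>] 0) (𝓝 0)
  tendsto_atTop : Tendsto σ atTop (𝓝 1)

noncomputable def levelRadius (σ : ℝ → ℝ) (q : ℝ) : ℝ :=
  sSup {r | 0 ≤ r ∧ σ r ≤ q}

namespace IsDistanceDistribution

variable {σ : ℝ → ℝ} (hσ : IsDistanceDistribution σ)
include hσ

lemma map_zero : σ 0 = 0 :=
  le_antisymm (ge_of_tendsto hσ.tendsto_nhdsGT_zero (eventually_nhdsWithin_of_forall
    fun _ hr => hσ.strictMonoOn.monotoneOn self_mem_Ici (mem_Ici.2 (le_of_lt hr)) (le_of_lt hr)))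
    (hσ.mem_Icc 0 le_rfl).1

lemma pos {r : ℝ} (hr : 0 < r) : 0 < σ r :=
  hσ.map_zero ▸ hσ.strictMonoOn self_mem_Ici (mem_Ici.2 hr.le) hr

lemma lt_one {r : ℝ} (hr : 0 ≤ r) : σ r < 1 :=
  (hσ.strictMonoOn hr (mem_Ici.2 (by linarith)) (lt_add_one r)).trans_le
    (hσ.mem_Icc _ (by linarith)).2

variable {q : ℝ}

lemma exists_pos_le (hq : 0 < q) : ∃ r, 0 < r ∧ σ r ≤ q :=
  let ⟨r, hrq, hr⟩ := ((hσ.tendsto_nhdsGT_zero.eventually_lt_const hq).and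
    self_mem_nhdsWithin).exists
  ⟨r, hr, hrq.le⟩

lemma bddAbove_levelSet (hq : q < 1) : BddAbove {r | 0 ≤ r ∧ σ r ≤ q} :=
  let ⟨M, hM⟩ := eventually_atTop.1 (hσ.tendsto_atTop.eventually_const_lt hq)
  ⟨M, fun r hr => le_of_not_gt fun h => (hM r h.le).not_ge hr.2⟩

lemma levelRadius_pos (hq₀ : 0 < q) (hq₁ : q < 1) : 0 < levelRadius σ q :=
  let ⟨_, hr, hrq⟩ := hσ.exists_pos_le hq₀
  hr.trans_le (le_csSup (hσ.bddAbove_levelSet hq₁) ⟨hr.le, hrq⟩)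

lemma le_levelRadius_iff (hq₀ : 0 < q) (hq₁ : q < 1) {r : ℝ} (hr : 0 ≤ r) :
    σ r ≤ q ↔ r ≤ levelRadius σ q := by
  refine ⟨fun h => le_csSup (hσ.bddAbove_levelSet hq₁) ⟨hr, h⟩, fun h => ?_⟩
  have hpos := hσ.levelRadius_pos hq₀ hq₁
  have hne : {r | 0 ≤ r ∧ σ r ≤ q}.Nonempty :=
    let ⟨r₀, hr₀, hr₀q⟩ := hσ.exists_pos_le hq₀
    ⟨r₀, hr₀.le, hr₀q⟩
  have hlt : ∀ s, 0 ≤ s → s < levelRadius σ q → σ s ≤ q := fun s hs hsR =>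
    let ⟨a, ha, hsa⟩ := exists_lt_of_lt_csSup hne hsR
    (hσ.strictMonoOn.monotoneOn hs (mem_Ici.2 (hs.trans hsa.le)) hsa.le).trans ha.2
  rcases h.eq_or_lt with rfl | h
  · -- left continuity of `σ` at the radius
    refine le_of_tendsto ((hσ.continuousWithinAt_Iic _ hpos).mono Iio_subset_Iic_self) ?_
    filter_upwards [Ioo_mem_nhdsLT hpos] with s hs using hlt s hs.1.le hs.2
  · exact hlt r hr h

lemma levelRadius_lt (hq₀ : 0 < q) (hq₁ : q < 1) {r : ℝ} (hr : 0 ≤ r) (h : q < σ r) :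
    levelRadius σ q < r :=
  not_le.1 fun hle => h.not_ge ((hσ.le_levelRadius_iff hq₀ hq₁ hr).2 hle)

lemma exists_levelRadius_le (K : ℕ) {r : ℝ} (hr : 0 < r) :
    ∃ k : ℕ, levelRadius σ (Real.exp (-(K + k : ℕ))) ≤ r := by
  obtain ⟨k, hk⟩ := exists_nat_gt (-Real.log (σ r))
  have hlog : 0 < -Real.log (σ r) := neg_pos.2 (Real.log_neg (hσ.pos hr) (hσ.lt_one hr.le))
  have hKk : (k : ℝ) ≤ (K + k : ℕ) := by push_cast; linarith [K.cast_nonneg (α := ℝ)]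
  refine ⟨k, (hσ.levelRadius_lt (Real.exp_pos _)
    (Real.exp_lt_one_iff.2 (by linarith)) hr.le ?_).le⟩
  calc Real.exp (-(K + k : ℕ)) ≤ Real.exp (-k) := Real.exp_le_exp.2 (by linarith)
    _ < Real.exp (Real.log (σ r)) := Real.exp_lt_exp.2 (by linarith)
    _ = σ r := Real.exp_log (hσ.pos hr)

end IsDistanceDistribution

/-- `ν` is the Lebesgue–Stieltjes measure `dσ^t` of `r ↦ σ r ^ t` on `[0, ∞)`. -/
structure IsStieltjesPow (σ : ℝ → ℝ) (t : ℝ) (ν : Measure ℝ) : Prop where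
  measure_Ico : ∀ a b, 0 ≤ a → a ≤ b → ν (Ico a b) = ENNReal.ofReal (σ b ^ t - σ a ^ t)
  measure_Iio_zero : ν (Iio 0) = 0

namespace IsStieltjesPow

variable {σ : ℝ → ℝ} {t : ℝ} {ν : Measure ℝ}
  (hν : IsStieltjesPow σ t ν) (hσ : IsDistanceDistribution σ) (ht : 0 < t)
include hν hσ ht

lemma measure_Iio {b : ℝ} (hb : 0 ≤ b) : ν (Iio b) = ENNReal.ofReal (σ b ^ t) := by
  have hdiff : Iio b \ Iio 0 = Ico 0 b := by
    ext r
    simp [and_comm]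
  rw [← measure_sdiff_null hν.measure_Iio_zero, hdiff, hν.measure_Ico 0 b le_rfl hb, hσ.map_zero,
    Real.zero_rpow ht.ne', sub_zero]

lemma measure_Iic_zero : ν (Iic 0) = 0 := by
  have hlim : Tendsto (fun r => ENNReal.ofReal (σ r ^ t)) (𝓝[>] 0) (𝓝 0) := by
    have hpow := (Real.continuousAt_rpow_const 0 t (Or.inr ht.le)).tendsto
    rw [Real.zero_rpow ht.ne'] at hpow
    simpa [Function.comp_def] using
      (ENNReal.continuous_ofReal.tendsto 0).comp (hpow.comp hσ.tendsto_nhdsGT_zero)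
  refine le_antisymm (ge_of_tendsto hlim (eventually_nhdsWithin_of_forall fun r hr => ?_))
    zero_le
  rw [← hν.measure_Iio hσ ht (le_of_lt hr)]
  exact measure_mono (Iic_subset_Iio.2 hr)

lemma ae_pos :
    ∀ᵐ r ∂ν, 0 < r :=
  measure_mono_null (fun _ hr => not_lt.1 (mem_compl_iff _ _ |>.1 hr)) (hν.measure_Iic_zero hσ ht)

lemma measure_univ_le_one : ν univ ≤ 1 := by
  refine le_of_tendsto' (tendsto_measure_Iic_atTop ν) fun r => ?_
  calc ν (Iic r) ≤ ν (Iio (max r 0 + 1)) :=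
        measure_mono (Iic_subset_Iio.2 ((le_max_left r 0).trans_lt (lt_add_one _)))
    _ = ENNReal.ofReal (σ (max r 0 + 1) ^ t) := hν.measure_Iio hσ ht (by positivity)
    _ ≤ 1 := ENNReal.ofReal_le_one.2 (Real.rpow_le_one (hσ.mem_Icc _ (by positivity)).1
          (hσ.mem_Icc _ (by positivity)).2 ht.le)

lemma isFiniteMeasure : IsFiniteMeasure ν :=
  ⟨(hν.measure_univ_le_one hσ ht).trans_lt ENNReal.one_lt_top⟩

lemma measure_Iio_le_of_le {t' : ℝ} {ν' : Measure ℝ} (hν' : IsStieltjesPow σ t' ν')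
    (htt' : t ≤ t') (b : ℝ) : ν' (Iio b) ≤ ν (Iio b) := by
  rcases lt_or_ge b 0 with hb | hb
  · exact (measure_mono_null (Iio_subset_Iio hb.le) hν'.measure_Iio_zero).trans_le zero_le
  rw [hν.measure_Iio hσ ht hb, hν'.measure_Iio hσ (ht.trans_le htt') hb]
  exact ENNReal.ofReal_le_ofReal (Real.rpow_le_rpow_of_exponent_ge' (hσ.mem_Icc b hb).1
    (hσ.mem_Icc b hb).2 ht.le htt')

end IsStieltjesPow

section IntrinsicBalls

variable {X : Type*} [MetricSpace X] {σ : ℝ → ℝ}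

lemma mem_starBall_iff (hσ : IsDistanceDistribution σ) {x y : X} {τ : ℝ} (hτ : 0 < τ) :
    y ∈ starBall σ x (1 / τ) ↔ σ (dist x y) ≤ Real.exp (-τ) := by
  simp only [starBall, mem_ofPred_eq, dstar]
  split_ifs with hxy
  · subst hxy
    simp only [dist_self, hσ.map_zero]
    exact iff_of_true (by positivity) (Real.exp_pos _).le
  have hd := dist_pos.2 hxy
  have hlog : 0 < Real.log (1 / σ (dist x y)) :=
    Real.log_pos (one_lt_one_div (hσ.pos hd) (hσ.lt_one hd.le))
  rw [one_div_le_one_div hlog hτ, one_div, Real.log_inv, le_neg,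
    Real.log_le_iff_le_exp (hσ.pos hd)]

lemma starBall_eq_closedBall (hσ : IsDistanceDistribution σ) (x : X) {τ : ℝ} (hτ : 0 < τ) :
    starBall σ x (1 / τ) = closedBall x (levelRadius σ (Real.exp (-τ))) := by
  ext y
  rw [mem_starBall_iff hσ hτ, mem_closedBall, dist_comm,
    hσ.le_levelRadius_iff (Real.exp_pos _) (Real.exp_lt_one_iff.2 (neg_neg_of_pos hτ))
      dist_nonneg]

lemma eventually_inv_measure_closedBall_levelRadius_le [MeasurableSpace X] {μ : Measure X}
    {x : X} (hμ : ∀ r, 0 < r → 0 < μ (closedBall x r)) (hσ : IsDistanceDistribution σ) {s : ℝ}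
    (hN : limsup (fun τ : ℝ => ((Real.log (specN μ σ x τ).toReal / τ : ℝ) : EReal)) atTop < s) :
    ∀ᶠ τ in atTop,
      (μ (closedBall x (levelRadius σ (Real.exp (-τ)))))⁻¹ ≤ ENNReal.ofReal (Real.exp (s * τ)) := by
  have hspec : ∀ τ, 0 < τ →
      specN μ σ x τ = (μ (closedBall x (levelRadius σ (Real.exp (-τ)))))⁻¹ := fun τ hτ => by
    rw [specN, starBall_eq_closedBall hσ x hτ]
  have hfin : ∀ᶠ τ in atTop, specN μ σ x τ ≠ ⊤ := by
    filter_upwards [eventually_gt_atTop 0] with τ hτ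
    rw [hspec τ hτ, ENNReal.inv_ne_top]
    exact (hμ _ (hσ.levelRadius_pos (Real.exp_pos _)
      (Real.exp_lt_one_iff.2 (neg_neg_of_pos hτ)))).ne'
  filter_upwards [eventually_le_ofReal_exp_of_limsup_lt hfin hN, eventually_gt_atTop 0]
    with τ hle hτ
  rwa [← hspec τ hτ]

end IntrinsicBalls

lemma lintegral_inv_measure_closedBall_lt_top {X : Type*} [MetricSpace X] [MeasurableSpace X]
    {μ : Measure X} {x : X} (hμ : ∀ r, 0 < r → 0 < μ (closedBall x r)) {σ : ℝ → ℝ}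
    (hσ : IsDistanceDistribution σ) {t : ℝ} {ν : Measure ℝ} (hν : IsStieltjesPow σ t ν)
    (ht : 0 < t) {s : ℝ} (hst : s < t)
    (hgrowth : ∀ᶠ τ in atTop,
      (μ (closedBall x (levelRadius σ (Real.exp (-τ)))))⁻¹ ≤ ENNReal.ofReal (Real.exp (s * τ))) :
    ∫⁻ r, (μ (closedBall x r))⁻¹ ∂ν < ⊤ := by
  set g : ℝ → ℝ≥0∞ := fun r => (μ (closedBall x r))⁻¹
  obtain ⟨K, hK⟩ := eventually_atTop.1
    (tendsto_natCast_atTop_atTop.eventually (hgrowth.and (eventually_gt_atTop 0)))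
  set c : ℕ → ℝ := fun k => levelRadius σ (Real.exp (-(K + k : ℕ)))
  have hexp_lt_one : ∀ k, Real.exp (-(K + k : ℕ)) < 1 := fun k =>
    Real.exp_lt_one_iff.2 (neg_neg_of_pos (hK _ le_self_add).2)
  have hc_pos : ∀ k, 0 < c k := fun k => hσ.levelRadius_pos (Real.exp_pos _) (hexp_lt_one k)
  have hσc : ∀ k, σ (c k) ≤ Real.exp (-(K + k : ℕ)) := fun k =>
    (hσ.le_levelRadius_iff (Real.exp_pos _) (hexp_lt_one k) (hc_pos k).le).2 le_rfl
  have hterm : ∀ k : ℕ, g (c (k + 1)) * ν (Iio (c k))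
      ≤ ENNReal.ofReal (Real.exp ((s + K * (s - t)) + k * (s - t))) := by
    intro k
    have hνc : ν (Iio (c k)) ≤ ENNReal.ofReal (Real.exp (-(K + k : ℕ)) ^ t) := by
      rw [hν.measure_Iio hσ ht (hc_pos k).le]
      exact ENNReal.ofReal_le_ofReal
        (Real.rpow_le_rpow (hσ.mem_Icc _ (hc_pos k).le).1 (hσc k) ht.le)
    calc g (c (k + 1)) * ν (Iio (c k))
        ≤ ENNReal.ofReal (Real.exp (s * (K + (k + 1) : ℕ)))
          * ENNReal.ofReal (Real.exp (-(K + k : ℕ)) ^ t) :=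
          mul_le_mul' (hK _ le_self_add).1 hνc
      _ = _ := by
          rw [← ENNReal.ofReal_mul (Real.exp_pos _).le, ← Real.exp_mul, ← Real.exp_add]
          push_cast
          ring_nf
  calc ∫⁻ r, g r ∂ν
      ≤ g (c 0) * ν univ + ∑' k, g (c (k + 1)) * ν (Iio (c k)) :=
        lintegral_le_add_tsum_of_antitone (antitone_inv_measure_closedBall μ x)
          (hν.ae_pos hσ ht) fun _ hr => hσ.exists_levelRadius_le K hr
    _ < ⊤ := by
        refine ENNReal.add_lt_top.2 ⟨ENNReal.mul_lt_top ?_ ?_, ?_⟩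
        · exact ENNReal.inv_lt_top.2 (hμ _ (hc_pos 0))
        · exact (hν.measure_univ_le_one hσ ht).trans_lt ENNReal.one_lt_top
        · exact (ENNReal.tsum_le_tsum hterm).trans_lt (tsum_ofReal_exp_lt_top _ (by linarith))

theorem statement_7_general
    {X : Type*} [MetricSpace X]
    [MeasurableSpace X]
    (μ : Measure X)
    (hμpos : ∀ (x : X) (r : ℝ), 0 < r → 0 < μ (closedBall x r))
    (σ : ℝ → ℝ)
    (hσmono : StrictMonoOn σ (Set.Ici 0))
    (hσrange : ∀ r : ℝ, 0 ≤ r → σ r ∈ Set.Icc (0:ℝ) 1)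
    (hσlc : ∀ r : ℝ, 0 < r → ContinuousWithinAt σ (Set.Iic r) r)
    (hσzero : Tendsto σ (nhdsWithin 0 (Set.Ioi 0)) (nhds 0))
    (hσtop : Tendsto σ atTop (nhds 1))
    (ν : ℝ → Measure ℝ)
    (hν : ∀ t : ℝ, 0 < t → ∀ a b : ℝ, 0 ≤ a → a ≤ b →
      ν t (Set.Ico a b) = ENNReal.ofReal (σ b ^ t - σ a ^ t))
    (hνneg : ∀ t : ℝ, 0 < t → ν t (Set.Iio 0) = 0)
    (x : X) :
    AntitoneOn (fun t : ℝ => heatK μ ν t x x) (Set.Ioi 0) ∧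
    ∀ t : ℝ, 0 < t →
      limsup (fun τ : ℝ => ((Real.log ((specN μ σ x τ).toReal) / τ : ℝ) : EReal)) atTop
        < (t : EReal) →
      heatK μ ν t x x < ⊤ := by
  have hσ : IsDistanceDistribution σ := ⟨hσmono, hσrange, hσlc, hσzero, hσtop⟩
  have hνt : ∀ t, 0 < t → IsStieltjesPow σ t (ν t) := fun t ht => ⟨hν t ht, hνneg t ht⟩
  have hheat : ∀ t, 0 < t → heatK μ ν t x x = ∫⁻ r, (μ (closedBall x r))⁻¹ ∂ν t := by
    intro t ht
    rw [heatK, dist_self, Measure.restrict_eq_self_of_ae_mem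
      ((hνt t ht).ae_pos hσ ht |>.mono fun _ hr => mem_Ici.2 hr.le)]
  refine ⟨fun t₁ ht₁ t₂ ht₂ ht₁₂ => ?_, fun t ht hlim => ?_⟩
  · have := (hνt t₁ ht₁).isFiniteMeasure hσ ht₁
    simp only [hheat t₁ ht₁, hheat t₂ ht₂]
    exact lintegral_le_of_antitone_of_measure_Iio_le
      ((hνt t₁ ht₁).measure_Iio_le_of_le hσ ht₁ (hνt t₂ ht₂) ht₁₂)
      (antitone_inv_measure_closedBall μ x)
  · obtain ⟨s, hs, hst⟩ := EReal.lt_iff_exists_real_btwn.1 hlim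
    rw [hheat t ht]
    exact lintegral_inv_measure_closedBall_lt_top (hμpos x) hσ (hνt t ht) ht
      (EReal.coe_lt_coe_iff.1 hst)
      (eventually_inv_measure_closedBall_levelRadius_le (hμpos x) hσ hs)

theorem statement_7
    {X : Type*} [MetricSpace X] [TopologicalSpace.SeparableSpace X]
    [MeasurableSpace X] [BorelSpace X]
    (hd : ∀ x y z : X, dist x z ≤ max (dist x y) (dist y z))
    (hcb : ∀ (x : X) (r : ℝ), IsCompact (closedBall x r))
    (μ : Measure X)
    (hμpos : ∀ (x : X) (r : ℝ), 0 < r → 0 < μ (closedBall x r))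
    (hμfin : ∀ (x : X) (r : ℝ), 0 < r → μ (closedBall x r) < ⊤)
    (σ : ℝ → ℝ)
    (hσmono : StrictMonoOn σ (Set.Ici 0))
    (hσrange : ∀ r : ℝ, 0 ≤ r → σ r ∈ Set.Icc (0:ℝ) 1)
    (hσlc : ∀ r : ℝ, 0 < r → ContinuousWithinAt σ (Set.Iic r) r)
    (hσzero : Tendsto σ (nhdsWithin 0 (Set.Ioi 0)) (nhds 0))
    (hσtop : Tendsto σ atTop (nhds 1))
    (ν : ℝ → Measure ℝ)
    (hν : ∀ t : ℝ, 0 < t → ∀ a b : ℝ, 0 ≤ a → a ≤ b →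
      ν t (Set.Ico a b) = ENNReal.ofReal (σ b ^ t - σ a ^ t))
    (hνneg : ∀ t : ℝ, 0 < t → ν t (Set.Iio 0) = 0)
    (x : X) :
    AntitoneOn (fun t : ℝ => heatK μ ν t x x) (Set.Ioi 0) ∧
    ∀ t : ℝ, 0 < t →
      limsup (fun τ : ℝ => ((Real.log ((specN μ σ x τ).toReal) / τ : ℝ) : EReal)) atTop
        < (t : EReal) →
      heatK μ ν t x x < ⊤ :=
  statement_7_general μ hμpos σ hσmono hσrange hσlc hσzero hσtop ν hν hνneg x
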